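/- Let w be an infinite partial word with infinitely many holes over an alphabet of size k ≥ 2. If ŵ is a completion of w such that p_w(n) ≤ p_ŵ(n) + C for all n > 0 and some constant C, then Sub(w) = Sub(ŵ) and hence p_w(n) = p_ŵ(n) for all n. -/

import Mathlib

open Set

variable {A : Type*}

/-- The full word `u` occurs at position `i` in the partial word `w`
(`none` is the hole symbol, compatible with every letter). -/
def Occurs (w : ℕ → Option A) (u : List A) (i : ℕ) : Prop :=
  ∀ j : Fin u.length, w (i + (j : ℕ)) = none ∨ w (i + (j : ℕ)) = some (u.get j)

/-- `u` is a subword of `w`: it occurs at some position. -/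
def IsSubword (w : ℕ → Option A) (u : List A) : Prop :=
  ∃ i, Occurs w u i

/-- `u` is a recurrent subword of `w`: it occurs at infinitely many positions. -/
def IsRecSubword (w : ℕ → Option A) (u : List A) : Prop :=
  {i | Occurs w u i}.Infinite

/-- Subword complexity: number of distinct full words of length `n`
that are subwords of `w`. -/
noncomputable def pcomp (w : ℕ → Option A) (n : ℕ) : ℕ :=
  {u : List A | u.length = n ∧ IsSubword w u}.ncard

/-- Number of recurrent subwords of length `n`. -/
noncomputable def rcomp (w : ℕ → Option A) (n : ℕ) : ℕ :=
  {u : List A | u.length = n ∧ IsRecSubword w u}.ncard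

/-- `w` is recurrent: every subword occurs infinitely often. -/
def Recurrent (w : ℕ → Option A) : Prop :=
  ∀ u : List A, IsSubword w u → IsRecSubword w u

/-- `w` is ultimately recurrent: some shift of `w` is recurrent. -/
def UltimatelyRecurrent (w : ℕ → Option A) : Prop :=
  ∃ p, Recurrent (fun i => w (i + p))

/-- `c` is a completion of `w`: it agrees with `w` at every non-hole position. -/
def IsCompletion (w : ℕ → Option A) (c : ℕ → A) : Prop :=
  ∀ i, ∀ a : A, w i = some a → c i = a

/-- `w` is uniformly recurrent: for every subword `u` there is a window size `m`
such that every factor of `w` of length `m` contains an occurrence of `u`. -/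
def UniformlyRecurrent (w : ℕ → Option A) : Prop :=
  ∀ u : List A, IsSubword w u →
    ∃ m, ∀ i, ∃ j, i ≤ j ∧ j + u.length ≤ i + m ∧ Occurs w u j

/-- Every factor of `w` of length `m` contains every length-`n` subword of `w`. -/
def GoodWindow (w : ℕ → Option A) (n m : ℕ) : Prop :=
  ∀ u : List A, u.length = n → IsSubword w u →
    ∀ i, ∃ j, i ≤ j ∧ j + n ≤ i + m ∧ Occurs w u j

/-- The recurrence function `R_w(n)`: the least window size `m` such that every
factor of length `m` contains every subword of length `n`. -/
noncomputable def Rfun (w : ℕ → Option A) (n : ℕ) : ℕ :=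
  sInf {m | GoodWindow w n m}

/-- `w` is ultimately periodic: from some position on, `w` is compatible with a
periodic sequence of letters. -/
def UltimatelyPeriodic (w : ℕ → Option A) : Prop :=
  ∃ N p, 0 < p ∧ ∃ a : ℕ → A, ∀ i, N ≤ i → w i = none ∨ w i = some (a (i % p))

/-! Suppose `u` is a subword of `w` but not of the completion `ŵ`, and fix an occurrence of `u`
in `w`. Filling the `h` holes among the next `M` positions in every possible way extends `u` to
`k ^ h` distinct subwords of `w` of length `|u| + M`, none of which is a subword of `ŵ` because
`u` is not. As `w` has infinitely many holes, `M` can be chosen with `h = C`, and then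
`p_w(|u| + M) ≥ p_ŵ(|u| + M) + k ^ C > p_ŵ(|u| + M) + C`. -/

section Subwords

variable {w v : ℕ → Option A} {u l : List A} {i : ℕ}

lemma IsSubword.of_isCompletion {c : ℕ → A} (hc : IsCompletion w c)
    (hu : IsSubword (fun i => some (c i)) u) : IsSubword w u := by
  obtain ⟨p, hp⟩ := hu
  refine ⟨p, fun j => ?_⟩
  have hcj : c (p + j) = u.get j := by simpa using hp j
  cases h : w (p + j) with
  | none => exact Or.inl rfl
  | some a => exact Or.inr (by rw [← hcj, hc _ _ h])

lemma Occurs.append (hu : Occurs w u i) (hl : Occurs w l (i + u.length)) :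
    Occurs w (u ++ l) i := by
  intro ⟨j, hj⟩
  by_cases hju : j < u.length
  · simpa [List.getElem_append_left hju] using hu ⟨j, hju⟩
  · have := hl ⟨j - u.length, by simp at hj; omega⟩
    simp only [List.get_eq_getElem] at this ⊢
    rw [List.getElem_append_right (by omega)]
    rwa [show i + u.length + (j - u.length) = i + j by omega] at this

lemma IsSubword.of_append (h : IsSubword w (u ++ l)) : IsSubword w u := by
  obtain ⟨p, hp⟩ := h
  exact ⟨p, fun ⟨j, hj⟩ => by
    simpa [List.getElem_append_left hj] using hp ⟨j, by simp; omega⟩⟩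

lemma pcomp_congr (h : ∀ u, IsSubword w u ↔ IsSubword v u) (n : ℕ) :
    pcomp w n = pcomp v n := by
  simp only [pcomp, h]

end Subwords

lemma infinite_setOf_add {p : ℕ → Prop} (hp : {j | p j}.Infinite) (s : ℕ) :
    {j | p (s + j)}.Infinite := by
  refine Set.infinite_of_forall_exists_gt fun a => ?_
  obtain ⟨b, hb, hab⟩ := hp.exists_gt (s + a)
  exact ⟨b - s, by simpa [show s + (b - s) = b by omega] using hb, by omega⟩

section Counting

variable [Fintype A]

def compatibleLetters : Option A → Finset A
  | none => Finset.univ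
  | some a => {a}

lemma mem_compatibleLetters {o : Option A} {a : A} :
    a ∈ compatibleLetters o ↔ o = none ∨ o = some a := by
  cases o <;> simp [compatibleLetters, eq_comm]

lemma card_compatibleLetters (o : Option A) :
    (compatibleLetters o).card = if o = none then Fintype.card A else 1 := by
  cases o <;> simp [compatibleLetters]

lemma setOf_occurs_eq_image_piFinset (w : ℕ → Option A) (s M : ℕ) :
    {l : List A | l.length = M ∧ Occurs w l s} =
      List.ofFn ''
        ((Fintype.piFinset fun j : Fin M => compatibleLetters (w (s + j))) : Set (Fin M → A)) := by
  ext l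
  simp only [Set.mem_ofPred_eq, Set.mem_image, Finset.mem_coe, Fintype.mem_piFinset,
    mem_compatibleLetters]
  constructor
  · rintro ⟨rfl, hl⟩
    exact ⟨fun j => l[j], hl, List.ofFn_getElem⟩
  · rintro ⟨f, hf, rfl⟩
    refine ⟨List.length_ofFn, fun j => ?_⟩
    simpa using hf ⟨j, by simpa using j.2⟩

lemma ncard_setOf_occurs (w : ℕ → Option A) (s M : ℕ) :
    {l : List A | l.length = M ∧ Occurs w l s}.ncard =
      Fintype.card A ^ Nat.count (fun j => w (s + j) = none) M := by
  rw [setOf_occurs_eq_image_piFinset, Set.ncard_image_of_injective _ List.ofFn_injective,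
    Set.ncard_coe_finset, Fintype.card_piFinset]
  simp only [card_compatibleLetters]
  rw [Fin.prod_univ_eq_prod_range (fun j => if w (s + j) = none then Fintype.card A else 1),
    Finset.prod_ite, Finset.prod_const, Finset.prod_const_one, mul_one,
    Nat.count_eq_card_filter_range]

end Counting

section Complexity

variable [Fintype A] {w v : ℕ → Option A}

lemma pcomp_add_card_pow_count_le (hsub : ∀ l, IsSubword v l → IsSubword w l) {u : List A}
    {i : ℕ} (hu : Occurs w u i) (hnu : ¬ IsSubword v u) (M : ℕ) :
    pcomp v (u.length + M) +
        Fintype.card A ^ Nat.count (fun j => w (i + u.length + j) = none) M ≤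
      pcomp w (u.length + M) := by
  set T := {l : List A | l.length = u.length + M ∧ IsSubword v l}
  set S := {l : List A | l.length = u.length + M ∧ IsSubword w l}
  set E := (u ++ ·) '' {l : List A | l.length = M ∧ Occurs w l (i + u.length)}
  have hS : S.Finite := (List.finite_length_eq A _).subset fun l hl => hl.1
  have hTS : T ⊆ S := fun l hl => ⟨hl.1, hsub l hl.2⟩
  have hES : E ⊆ S := by
    rintro _ ⟨l, ⟨hlen, hl⟩, rfl⟩
    exact ⟨by simp [hlen], i, hu.append hl⟩
  have hTE : Disjoint T E := Set.disjoint_left.2 fun _ hT ⟨_, _, hl⟩ =>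
    hnu (hl ▸ hT.2).of_append
  have hE : E.ncard = Fintype.card A ^ Nat.count (fun j => w (i + u.length + j) = none) M := by
    rw [Set.ncard_image_of_injective _ fun _ _ h => List.append_cancel_left h,
      ncard_setOf_occurs]
  calc pcomp v (u.length + M) + _ = (T ∪ E).ncard := by
        rw [Set.ncard_union_eq hTE (hS.subset hTS) (hS.subset hES), hE]; rfl
    _ ≤ pcomp w (u.length + M) := Set.ncard_le_ncard (Set.union_subset hTS hES) hS

lemma isSubword_of_pcomp_le_add (hk : 2 ≤ Fintype.card A) (hinf : {i | w i = none}.Infinite)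
    (hsub : ∀ l, IsSubword v l → IsSubword w l) (C : ℕ)
    (hC : ∀ n > 0, pcomp w n ≤ pcomp v n + C) {u : List A} (hu : IsSubword w u) :
    IsSubword v u := by
  obtain ⟨i, hu⟩ := hu
  by_contra hnu
  have hu0 : u ≠ [] := by rintro rfl; exact hnu ⟨0, nofun⟩
  set p := fun j => w (i + u.length + j) = none
  have hcount : Nat.count p (Nat.nth p C) = C :=
    Nat.count_nth_of_infinite (infinite_setOf_add hinf _) C
  have hmany := pcomp_add_card_pow_count_le hsub hu hnu (Nat.nth p C)
  have hfew := hC (u.length + Nat.nth p C) (by simp [List.length_pos_of_ne_nil hu0])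
  have hpow : C < Fintype.card A ^ C := Nat.lt_pow_self hk
  rw [hcount] at hmany
  omega

end Complexity

theorem stmt19 [Fintype A] (hk : 2 ≤ Fintype.card A) (w : ℕ → Option A)
    (hinf : {i | w i = none}.Infinite) (c : ℕ → A) (hc : IsCompletion w c)
    (C : ℕ) (hC : ∀ n > 0, pcomp w n ≤ pcomp (fun i => some (c i)) n + C) :
    (∀ u : List A, IsSubword w u ↔ IsSubword (fun i => some (c i)) u) ∧
      ∀ n, pcomp w n = pcomp (fun i => some (c i)) n := by
  have hsub : ∀ u, IsSubword (fun i => some (c i)) u → IsSubword w u :=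
    fun _ => IsSubword.of_isCompletion hc
  have hsubwords : ∀ u, IsSubword w u ↔ IsSubword (fun i => some (c i)) u :=
    fun _ => ⟨isSubword_of_pcomp_le_add hk hinf hsub C hC, hsub _⟩
  exact ⟨hsubwords, pcomp_congr hsubwords⟩
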